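/- Let (A, τ) be a subdirectly irreducible SMV-algebra. Then F_τ(A) := {a : τ(a) = 1} and τ(A) have the disjunction property: for x ∈ F_τ(A) and y ∈ τ(A), if x ∨ y = 1 then x = 1 or y = 1. -/

import Mathlib

/-- An MV-algebra `(A, ⊕, ¬, 0)`. -/
class MV (A : Type*) extends Zero A where
  oplus : A → A → A
  mvneg : A → A
  oplus_assoc : ∀ x y z : A, oplus (oplus x y) z = oplus x (oplus y z)
  oplus_comm : ∀ x y : A, oplus x y = oplus y x
  oplus_zero : ∀ x : A, oplus x 0 = x
  mvneg_mvneg : ∀ x : A, mvneg (mvneg x) = x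
  oplus_top : ∀ x : A, oplus x (mvneg 0) = mvneg 0
  luk : ∀ x y : A, oplus (mvneg (oplus (mvneg x) y)) y = oplus (mvneg (oplus (mvneg y) x)) x

namespace MV

variable {A : Type*} [MV A]

/-- The top element `1 = ¬0`. -/
def top : A := mvneg 0
/-- `x → y := ¬x ⊕ y`. -/
def imp (x y : A) : A := oplus (mvneg x) y
/-- `x ⊙ y := ¬(¬x ⊕ ¬y)`. -/
def odot (x y : A) : A := mvneg (oplus (mvneg x) (mvneg y))
/-- `x ⊖ y := ¬(¬x ⊕ y)`. -/
def ominus (x y : A) : A := mvneg (oplus (mvneg x) y)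
/-- Lattice join `x ∨ y := (x → y) → y`. -/
def mvsup (x y : A) : A := imp (imp x y) y
/-- Lattice meet `x ∧ y := x ⊙ (x → y)`. -/
def mvinf (x y : A) : A := odot x (imp x y)
/-- The lattice order: `x ≤ y` iff `x → y = 1`. -/
def mvle (x y : A) : Prop := imp x y = top
/-- Strict order. -/
def mvlt (x y : A) : Prop := mvle x y ∧ x ≠ y

/-- `(A, τ)` is an SMV-algebra. -/
structure IsSMV (τ : A → A) : Prop where
  map_top : τ top = top
  tau_oplus : ∀ x y : A, τ (oplus x y) = oplus (τ x) (τ (ominus y (odot x y)))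
  map_neg : ∀ x : A, τ (mvneg x) = mvneg (τ x)
  tau_fix : ∀ x y : A, τ (oplus (τ x) (τ y)) = oplus (τ x) (τ y)

/-- `(A, τ)` is a state morphism MV-algebra. -/
def IsSMMV (τ : A → A) : Prop := IsSMV τ ∧ ∀ x y : A, τ (oplus x y) = oplus (τ x) (τ y)

/-- An MV-filter. -/
structure IsFilter (F : Set A) : Prop where
  top_mem : top ∈ F
  mp : ∀ a b : A, a ∈ F → imp a b ∈ F → b ∈ F

/-- A `τ`-filter: an MV-filter closed under `τ`. -/
def IsTauFilter (τ : A → A) (F : Set A) : Prop := IsFilter F ∧ ∀ a ∈ F, τ a ∈ F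

/-- Subdirect irreducibility of an SMV-algebra: there is a minimum nontrivial `τ`-filter. -/
def SubdirIrrSMV (τ : A → A) : Prop :=
  ∃ F : Set A, IsTauFilter τ F ∧ F ≠ {top} ∧
    ∀ G : Set A, IsTauFilter τ G → G ≠ {top} → F ⊆ G

/-- A filter of the subalgebra/subhoop with universe `S`. -/
def IsFilterOn (S F : Set A) : Prop :=
  F ⊆ S ∧ top ∈ F ∧ ∀ a b : A, a ∈ F → b ∈ S → imp a b ∈ F → b ∈ F

/-- Subdirect irreducibility of the subalgebra/subhoop with universe `S`:
there is a minimum nontrivial filter on `S`. -/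
def SubdirIrrOn (S : Set A) : Prop :=
  ∃ F : Set A, IsFilterOn S F ∧ F ≠ {top} ∧
    ∀ G : Set A, IsFilterOn S G → G ≠ {top} → F ⊆ G

/-- The set `F_τ(A) = {a : τ a = 1}`. -/
def tauKernel (τ : A → A) : Set A := {a : A | τ a = top}

/-- Homomorphisms of MV-algebras. -/
structure IsMVHom {A B : Type*} [MV A] [MV B] (f : A → B) : Prop where
  map_oplus : ∀ x y : A, f (oplus x y) = oplus (f x) (f y)
  map_neg : ∀ x : A, f (mvneg x) = mvneg (f x)
  map_zero : f 0 = 0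

end MV

open MV

instance MV.instProd {A B : Type*} [MV A] [MV B] : MV (A × B) where
  oplus x y := (oplus x.1 y.1, oplus x.2 y.2)
  mvneg x := (mvneg x.1, mvneg x.2)
  oplus_assoc x y z := by simp [oplus_assoc]
  oplus_comm x y := by simp [oplus_comm x.1 y.1, oplus_comm x.2 y.2]
  oplus_zero x := by simp [oplus_zero]
  mvneg_mvneg x := by simp [mvneg_mvneg]
  oplus_top x := by simp [oplus_top]
  luk x y := by simp [luk]

instance MV.instPi {I : Type*} {A : I → Type*} [∀ i, MV (A i)] : MV (∀ i, A i) where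
  oplus x y i := oplus (x i) (y i)
  mvneg x i := mvneg (x i)
  oplus_assoc x y z := by funext i; simp [oplus_assoc]
  oplus_comm x y := by funext i; exact oplus_comm _ _
  oplus_zero x := by funext i; exact oplus_zero _
  mvneg_mvneg x := by funext i; exact mvneg_mvneg _
  oplus_top x := by funext i; exact oplus_top _
  luk x y := by funext i; exact luk _ _

/-!
Both `x` (with `τ x = 1`) and `y = τ z` generate `τ`-filters: powers of `x` stay in the kernel
of `τ`, and `y = τ y` gives `yⁿ = (τ y)ⁿ ≤ τ (yⁿ)` because `τ` is super-multiplicative for `⊙`.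
If neither is `1`, both filters are nontrivial and hence contain the monolith, which has an
element `c ≠ 1`. Then `xᵐ ≤ c` and `yⁿ ≤ c` for some `m, n`; but `x ∨ y = 1` forces
`xᵐ ∨ yⁿ = 1`, so `c = 1`.
-/

namespace MV

variable {A : Type*} [MV A]

lemma zero_oplus (x : A) : oplus 0 x = x := by rw [oplus_comm, oplus_zero]

lemma top_oplus (x : A) : oplus top x = top := by rw [oplus_comm]; exact oplus_top x

lemma mvneg_top : mvneg (top : A) = 0 := mvneg_mvneg 0

lemma mvneg_oplus_self (x : A) : oplus (mvneg x) x = top := by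
  have h := luk x top
  rw [show oplus (mvneg x) top = top from oplus_top _, mvneg_top, zero_oplus, zero_oplus] at h
  exact h.symm

lemma oplus_left_comm (x y z : A) : oplus x (oplus y z) = oplus y (oplus x z) := by
  rw [← oplus_assoc, oplus_comm x y, oplus_assoc]

lemma mvle_iff_exists_oplus {x y : A} : mvle x y ↔ ∃ z, y = oplus x z := by
  constructor
  · intro hle
    have h := luk x y
    rw [show oplus (mvneg x) y = top from hle, mvneg_top, zero_oplus, oplus_comm] at h
    exact ⟨_, h⟩
  · rintro ⟨z, rfl⟩
    show oplus (mvneg x) (oplus x z) = top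
    rw [← oplus_assoc, mvneg_oplus_self, top_oplus]

lemma mvle_refl (x : A) : mvle x x := mvneg_oplus_self x

lemma mvle_top (x : A) : mvle x top := oplus_top (mvneg x)

lemma eq_top_of_top_mvle {x : A} (h : mvle top x) : x = top := by
  obtain ⟨z, rfl⟩ := mvle_iff_exists_oplus.mp h
  exact top_oplus z

lemma mvle_trans {x y z : A} (hxy : mvle x y) (hyz : mvle y z) : mvle x z := by
  obtain ⟨u, rfl⟩ := mvle_iff_exists_oplus.mp hxy
  obtain ⟨v, rfl⟩ := mvle_iff_exists_oplus.mp hyz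
  exact mvle_iff_exists_oplus.mpr ⟨oplus u v, oplus_assoc x u v⟩

lemma oplus_mvle_oplus_right (c : A) {a b : A} (h : mvle a b) :
    mvle (oplus c a) (oplus c b) := by
  obtain ⟨w, rfl⟩ := mvle_iff_exists_oplus.mp h
  exact mvle_iff_exists_oplus.mpr ⟨w, (oplus_assoc c a w).symm⟩

lemma oplus_mvle_oplus {a b c d : A} (hab : mvle a b) (hcd : mvle c d) :
    mvle (oplus a c) (oplus b d) := by
  refine mvle_trans (oplus_mvle_oplus_right a hcd) ?_
  rw [oplus_comm a, oplus_comm b]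
  exact oplus_mvle_oplus_right d hab

lemma mvneg_mvle_mvneg {x y : A} (h : mvle x y) : mvle (mvneg y) (mvneg x) := by
  show oplus (mvneg (mvneg y)) (mvneg x) = top
  rw [mvneg_mvneg, oplus_comm]
  exact h

lemma odot_comm (x y : A) : odot x y = odot y x := by
  unfold odot; rw [oplus_comm]

lemma odot_assoc (x y z : A) : odot (odot x y) z = odot x (odot y z) := by
  unfold odot; rw [mvneg_mvneg, mvneg_mvneg, oplus_assoc]

lemma odot_top (x : A) : odot x top = x := by
  unfold odot; rw [mvneg_top, oplus_zero, mvneg_mvneg]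

lemma top_odot (x : A) : odot top x = x := by rw [odot_comm, odot_top]

lemma odot_mvle_odot {a b c d : A} (hab : mvle a b) (hcd : mvle c d) :
    mvle (odot a c) (odot b d) :=
  mvneg_mvle_mvneg (oplus_mvle_oplus (mvneg_mvle_mvneg hab) (mvneg_mvle_mvneg hcd))

lemma odot_mvle_left (x y : A) : mvle (odot x y) x := by
  show oplus (mvneg (mvneg (oplus (mvneg x) (mvneg y)))) x = top
  rw [mvneg_mvneg, oplus_comm (mvneg x), oplus_assoc, mvneg_oplus_self]
  exact oplus_top _

lemma odot_mvle_right (x y : A) : mvle (odot x y) y := by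
  rw [odot_comm]; exact odot_mvle_left y x

lemma odot_mvle_iff_mvle_imp {x y z : A} : mvle (odot x y) z ↔ mvle y (imp x z) := by
  show oplus (mvneg (mvneg (oplus (mvneg x) (mvneg y)))) z = top ↔
    oplus (mvneg y) (oplus (mvneg x) z) = top
  rw [mvneg_mvneg, oplus_assoc, oplus_left_comm]

lemma odot_imp_mvle (a b : A) : mvle (odot a (imp a b)) b :=
  odot_mvle_iff_mvle_imp.mpr (mvle_refl _)

lemma ominus_mvle_left (v c : A) : mvle (ominus v c) v := by
  have h : mvle (mvneg v) (oplus (mvneg v) c) := mvle_iff_exists_oplus.mpr ⟨c, rfl⟩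
  simpa only [mvneg_mvneg, ominus] using mvneg_mvle_mvneg h

lemma mvsup_comm (x y : A) : mvsup x y = mvsup y x := luk x y

lemma mvle_mvsup_right (x y : A) : mvle y (mvsup x y) :=
  mvle_iff_exists_oplus.mpr ⟨_, oplus_comm _ _⟩

lemma mvle_mvsup_left (x y : A) : mvle x (mvsup x y) := by
  rw [mvsup_comm]; exact mvle_mvsup_right y x

-- `y ↦ y ∨ x = ¬(¬y ⊕ x) ⊕ x` is monotone, and `u ∨ x = x ∨ u = u` because `x ≤ u`.
lemma mvsup_mvle {x y u : A} (hxu : mvle x u) (hyu : mvle y u) : mvle (mvsup x y) u := by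
  have hmono : mvle (mvsup y x) (mvsup u x) :=
    oplus_mvle_oplus (mvneg_mvle_mvneg (oplus_mvle_oplus (mvneg_mvle_mvneg hyu) (mvle_refl x)))
      (mvle_refl x)
  have hux : mvsup x u = u := by
    show oplus (mvneg (imp x u)) u = u
    rw [show imp x u = top from hxu, mvneg_top, zero_oplus]
  rwa [mvsup_comm y, mvsup_comm u, hux] at hmono

lemma mvsup_mvle_mvsup {a b c d : A} (hac : mvle a c) (hbd : mvle b d) :
    mvle (mvsup a b) (mvsup c d) :=
  mvsup_mvle (mvle_trans hac (mvle_mvsup_left c d)) (mvle_trans hbd (mvle_mvsup_right c d))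

lemma odot_mvsup_mvle (a b c : A) :
    mvle (odot a (mvsup b c)) (mvsup (odot a b) (odot a c)) :=
  odot_mvle_iff_mvle_imp.mpr <| mvsup_mvle
    (odot_mvle_iff_mvle_imp.mp (mvle_mvsup_left _ _))
    (odot_mvle_iff_mvle_imp.mp (mvle_mvsup_right _ _))

lemma mvsup_odot_mvle (a b c : A) :
    mvle (odot (mvsup a b) c) (mvsup (odot a c) (odot b c)) := by
  simpa only [odot_comm c] using odot_mvsup_mvle c a b

lemma odot_mvsup_mvsup_mvle (a b c : A) :
    mvle (odot (mvsup a b) (mvsup c b)) (mvsup (odot a c) b) :=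
  mvle_trans (odot_mvsup_mvle _ c b) <|
    mvle_trans (mvsup_mvle_mvsup (mvsup_odot_mvle a b c) (odot_mvle_right _ b)) <|
      mvsup_mvle (mvsup_mvle_mvsup (mvle_refl _) (odot_mvle_left b c)) (mvle_mvsup_right _ b)

def mvpow (x : A) : ℕ → A
  | 0 => top
  | n + 1 => odot x (mvpow x n)

lemma mvpow_top (n : ℕ) : mvpow (top : A) n = top := by
  induction n with
  | zero => rfl
  | succ n ih => rw [mvpow, ih, odot_top]

lemma mvpow_add (x : A) (m n : ℕ) : mvpow x (m + n) = odot (mvpow x m) (mvpow x n) := by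
  induction m with
  | zero => rw [Nat.zero_add, mvpow, top_odot]
  | succ m ih => rw [Nat.succ_add, mvpow, mvpow, ih, odot_assoc]

lemma mvsup_mvpow_left_eq_top {x y : A} (h : mvsup x y = top) (m : ℕ) :
    mvsup (mvpow x m) y = top := by
  induction m with
  | zero => exact eq_top_of_top_mvle (mvle_mvsup_left top y)
  | succ m ih =>
    have key := odot_mvsup_mvsup_mvle (mvpow x m) y x
    rw [ih, h, odot_top, odot_comm] at key
    exact eq_top_of_top_mvle key

lemma mvsup_mvpow_eq_top {x y : A} (h : mvsup x y = top) (m n : ℕ) :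
    mvsup (mvpow x m) (mvpow y n) = top := by
  have h' : mvsup y (mvpow x m) = top := by rw [mvsup_comm]; exact mvsup_mvpow_left_eq_top h m
  rw [mvsup_comm]
  exact mvsup_mvpow_left_eq_top h' n

def principal (x : A) : Set A := {a : A | ∃ n : ℕ, mvle (mvpow x n) a}

lemma mem_principal_self (x : A) : x ∈ principal x :=
  ⟨1, by rw [mvpow, mvpow, odot_top]; exact mvle_refl x⟩

lemma isFilter_principal (x : A) : IsFilter (principal x) where
  top_mem := ⟨0, mvle_top top⟩
  mp := by
    rintro a b ⟨m, hm⟩ ⟨n, hn⟩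
    refine ⟨m + n, ?_⟩
    rw [mvpow_add]
    exact mvle_trans (odot_mvle_odot hm hn) (odot_imp_mvle a b)

lemma principal_ne_singleton_top {x : A} (hx : x ≠ top) : principal x ≠ {top} :=
  fun h => hx (Set.mem_singleton_iff.mp (h ▸ mem_principal_self x))

lemma eq_top_of_mem_principal_of_mem_principal {x y c : A} (h : mvsup x y = top)
    (hcx : c ∈ principal x) (hcy : c ∈ principal y) : c = top := by
  obtain ⟨m, hm⟩ := hcx
  obtain ⟨n, hn⟩ := hcy
  have hc := mvsup_mvle hm hn
  rw [mvsup_mvpow_eq_top h m n] at hc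
  exact eq_top_of_top_mvle hc

section State

variable {τ : A → A}

lemma IsSMV.map_zero (h : IsSMV τ) : τ 0 = 0 := by
  simpa only [h.map_top, mvneg_top] using h.map_neg top

lemma IsSMV.map_map (h : IsSMV τ) (x : A) : τ (τ x) = τ x := by
  simpa only [h.map_zero, oplus_zero] using h.tau_fix x 0

lemma IsSMV.mvle_map {a b : A} (h : IsSMV τ) (hab : mvle a b) : mvle (τ a) (τ b) := by
  obtain ⟨w, rfl⟩ := mvle_iff_exists_oplus.mp hab
  rw [h.tau_oplus]
  exact mvle_iff_exists_oplus.mpr ⟨_, rfl⟩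

lemma IsSMV.map_oplus_mvle (h : IsSMV τ) (u v : A) :
    mvle (τ (oplus u v)) (oplus (τ u) (τ v)) := by
  rw [h.tau_oplus]
  exact oplus_mvle_oplus_right (τ u) (h.mvle_map (ominus_mvle_left v _))

lemma IsSMV.odot_mvle_map_odot (h : IsSMV τ) (a b : A) :
    mvle (odot (τ a) (τ b)) (τ (odot a b)) := by
  simpa only [odot, h.map_neg] using mvneg_mvle_mvneg (h.map_oplus_mvle (mvneg a) (mvneg b))

lemma IsSMV.mvpow_map_mvle (h : IsSMV τ) (x : A) (n : ℕ) :
    mvle (mvpow (τ x) n) (τ (mvpow x n)) := by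
  induction n with
  | zero => show mvle top (τ top); rw [h.map_top]; exact mvle_refl top
  | succ n ih =>
    exact mvle_trans (odot_mvle_odot (mvle_refl (τ x)) ih) (h.odot_mvle_map_odot x _)

lemma IsSMV.isTauFilter_principal_of_map_eq_top (h : IsSMV τ) {x : A} (hx : τ x = top) :
    IsTauFilter τ (principal x) := by
  refine ⟨isFilter_principal x, ?_⟩
  rintro a ⟨n, hn⟩
  have hpow := h.mvpow_map_mvle x n
  rw [hx, mvpow_top] at hpow
  exact ⟨0, mvle_trans hpow (h.mvle_map hn)⟩

lemma IsSMV.isTauFilter_principal_map (h : IsSMV τ) (z : A) :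
    IsTauFilter τ (principal (τ z)) := by
  refine ⟨isFilter_principal _, ?_⟩
  rintro a ⟨n, hn⟩
  have hpow := h.mvpow_map_mvle (τ z) n
  rw [h.map_map] at hpow
  exact ⟨n, mvle_trans hpow (h.mvle_map hn)⟩

end State

lemma SubdirIrrSMV.exists_mem_inter_ne_top {τ : A → A} (hsi : SubdirIrrSMV τ) {F G : Set A}
    (hF : IsTauFilter τ F) (hF₁ : F ≠ {top}) (hG : IsTauFilter τ G) (hG₁ : G ≠ {top}) :
    ∃ c ∈ F, c ∈ G ∧ c ≠ top := by
  obtain ⟨M, ⟨hM, -⟩, hM₁, hmin⟩ := hsi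
  obtain ⟨c, hcM, hc⟩ : ∃ c ∈ M, c ≠ top := by
    by_contra! hall
    exact hM₁ (Set.eq_singleton_iff_unique_mem.mpr ⟨hM.top_mem, hall⟩)
  exact ⟨c, hmin F hF hF₁ hcM, hmin G hG hG₁ hcM, hc⟩

end MV

/-- If `(A, τ)` is a subdirectly irreducible SMV-algebra, then
`F_τ(A)` and `τ(A)` have the disjunction property. -/
theorem disjunction_property {A : Type*} [MV A] (τ : A → A)
    (h : IsSMV τ) (hsi : SubdirIrrSMV τ) :
    ∀ x y : A, x ∈ tauKernel τ → y ∈ Set.range τ → mvsup x y = top →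
      x = top ∨ y = top := by
  rintro x _ hx ⟨z, rfl⟩ hsup
  by_contra! hne
  obtain ⟨c, hcx, hcy, hc⟩ := hsi.exists_mem_inter_ne_top
    (h.isTauFilter_principal_of_map_eq_top hx) (principal_ne_singleton_top hne.1)
    (h.isTauFilter_principal_map z) (principal_ne_singleton_top hne.2)
  exact hc (eq_top_of_mem_principal_of_mem_principal hsup hcx hcy)
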